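/- Let z, ζ ∈ ℂ with |z| ≤ 1/(4(1+B)) and |ζ| ≤ 1/(6(1+B)), and let h be analytic with |h(z)| ≤ min(1/3, (4/3)B|z|). If z = ζ e^{−h(z)/p} for some p ∈ ℕ, p ≥ 1, then |z − ζ| ≤ 3 B |ζ|². -/

import Mathlib

/-! With `w = -h(z)/p` we have `|w| ≤ |h(z)| ≤ 1/3`, so `|e^w| ≤ e^{1/3} ≤ 3/2` and
`|e^w - 1| ≤ |w| e^{|w|} ≤ (3/2) |w|`. Hence `|z| ≤ (3/2) |ζ|` and
`|z - ζ| = |ζ| |e^w - 1| ≤ (3/2) |ζ| (4/3) B |z| ≤ (3/2) (4/3) (3/2) B |ζ|² = 3 B |ζ|²`. -/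

theorem Real.exp_one_third_le : Real.exp (1 / 3) ≤ 3 / 2 :=
  (Real.exp_bound_div_one_sub_of_interval (by norm_num) (by norm_num)).trans_eq (by norm_num)

namespace Complex

theorem norm_exp_sub_one_le_norm_mul_exp (x : ℂ) : ‖exp x - 1‖ ≤ ‖x‖ * Real.exp ‖x‖ := by
  simpa using norm_exp_sub_sum_le_norm_mul_exp x 1

theorem norm_div_natCast_le {x : ℂ} {p : ℕ} (hp : 1 ≤ p) : ‖x / p‖ ≤ ‖x‖ := by
  rw [norm_div, norm_natCast]
  exact div_le_self (norm_nonneg x) (by exact_mod_cast hp)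

theorem exp_norm_le_of_norm_le_one_third {w : ℂ} (hw : ‖w‖ ≤ 1 / 3) : Real.exp ‖w‖ ≤ 3 / 2 :=
  (Real.exp_le_exp.mpr hw).trans Real.exp_one_third_le

theorem norm_mul_exp_le_of_norm_le_one_third {w : ℂ} (hw : ‖w‖ ≤ 1 / 3) (ζ : ℂ) :
    ‖ζ * exp w‖ ≤ 3 / 2 * ‖ζ‖ := by
  rw [norm_mul, mul_comm]
  gcongr
  exact (norm_exp_le_exp_norm w).trans (exp_norm_le_of_norm_le_one_third hw)

theorem norm_mul_exp_sub_self_le_of_norm_le_one_third {w : ℂ} (hw : ‖w‖ ≤ 1 / 3) (ζ : ℂ) :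
    ‖ζ * exp w - ζ‖ ≤ 3 / 2 * ‖ζ‖ * ‖w‖ := by
  calc ‖ζ * exp w - ζ‖ = ‖ζ‖ * ‖exp w - 1‖ := by rw [← norm_mul, mul_sub_one]
    _ ≤ ‖ζ‖ * (‖w‖ * (3 / 2)) := by
      gcongr
      exact (norm_exp_sub_one_le_norm_mul_exp w).trans
        (by gcongr; exact exp_norm_le_of_norm_le_one_third hw)
    _ = 3 / 2 * ‖ζ‖ * ‖w‖ := by ring

end Complex

theorem fixed_point_close_to_zeta_general (p : ℕ) (hp : 1 ≤ p) (B : ℝ) (hB : 0 ≤ B)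
    (h : ℂ → ℂ)
    (z ζ : ℂ)
    (hhz : ‖h z‖ ≤ min (1 / 3) (4 / 3 * B * ‖z‖))
    (hfix : z = ζ * Complex.exp (-h z / p)) :
    ‖z - ζ‖ ≤ 3 * B * ‖ζ‖ ^ 2 := by
  set w : ℂ := -h z / p
  have hw : ‖w‖ ≤ ‖h z‖ := (Complex.norm_div_natCast_le hp).trans_eq (norm_neg _)
  have hw_third : ‖w‖ ≤ 1 / 3 := hw.trans (hhz.trans (min_le_left _ _))
  have hwB : ‖w‖ ≤ 4 / 3 * B * ‖z‖ := hw.trans (hhz.trans (min_le_right _ _))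
  have hzζ : ‖z‖ ≤ 3 / 2 * ‖ζ‖ := hfix ▸ Complex.norm_mul_exp_le_of_norm_le_one_third hw_third ζ
  calc ‖z - ζ‖ ≤ 3 / 2 * ‖ζ‖ * ‖w‖ :=
        hfix ▸ Complex.norm_mul_exp_sub_self_le_of_norm_le_one_third hw_third ζ
    _ ≤ 3 / 2 * ‖ζ‖ * (4 / 3 * B * (3 / 2 * ‖ζ‖)) := by
        gcongr
        exact hwB.trans (by gcongr)
    _ = 3 * B * ‖ζ‖ ^ 2 := by ring

theorem fixed_point_close_to_zeta (p : ℕ) (hp : 1 ≤ p) (B : ℝ) (hB : 0 ≤ B)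
    (h : ℂ → ℂ) (hh : Differentiable ℂ h)
    (z ζ : ℂ) (hz : ‖z‖ ≤ 1 / (4 * (1 + B))) (hζ : ‖ζ‖ ≤ 1 / (6 * (1 + B)))
    (hhz : ‖h z‖ ≤ min (1 / 3) (4 / 3 * B * ‖z‖))
    (hfix : z = ζ * Complex.exp (-h z / p)) :
    ‖z - ζ‖ ≤ 3 * B * ‖ζ‖ ^ 2 :=
  fixed_point_close_to_zeta_general p hp B hB h z ζ hhz hfix
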